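/- For all real θ > 0, α > −1 and all x, y > 0, the limit kernel satisfies the symmetry relation 𝒦^{(α,θ)}(y^{1/θ}, x^{1/θ}) = θ · 𝒦^{((α+1)/θ − 1, 1/θ)}(x, y). (Note that α' = (α+1)/θ − 1 > −1 and θ' = 1/θ > 0, and the map (α,θ) ↦ (α',θ') is an involution.) -/

import Mathlib

/-!
Both sides are double power series in `y ^ (1/θ)` and `x`. The duality
`(α,θ) ↦ ((α+1)/θ - 1, 1/θ)` swaps the two Gamma factors, so after multiplying by `θ` the
coefficients agree once the summation indices are exchanged. The double series converges
absolutely, since `1/Γ` is bounded along arguments tending to infinity, so the two iterated sums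
may be interchanged.
-/

/-- The limit kernel `𝒦^{(α,θ)}(x,y)` of the biorthogonal Jacobi/Laguerre ensembles. -/
noncomputable def limitKernel (α θ x y : ℝ) : ℝ :=
  ∑' k : ℕ, ∑' l : ℕ,
    ((-1) ^ k * x ^ k / ((Nat.factorial k : ℝ) * Real.Gamma ((α + 1 + k) / θ))) *
      ((-1) ^ l * y ^ (θ * (l : ℝ)) /
        ((Nat.factorial l : ℝ) * Real.Gamma (α + 1 + θ * l))) *
      (θ / (α + 1 + k + θ * l))

open Filter Function Nat Real

lemma Real.one_le_Gamma_of_two_le {t : ℝ} (ht : 2 ≤ t) : 1 ≤ Gamma t :=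
  Gamma_two ▸ Gamma_strictMonoOn_Ici.monotoneOn (Set.mem_Ici.2 le_rfl) (Set.mem_Ici.2 ht) ht

lemma summable_norm_pow_div_factorial_mul_Gamma {s : ℕ → ℝ} (hs : Tendsto s atTop atTop)
    (X : ℝ) : Summable fun k : ℕ => ‖X ^ k / (k ! * Gamma (s k))‖ := by
  refine Summable.norm (summable_of_isBigO_nat (summable_pow_div_factorial X) ?_)
  refine Asymptotics.IsBigO.of_bound 1 ((hs.eventually_ge_atTop 2).mono fun k hk => ?_)
  have hΓ : 1 ≤ Gamma (s k) := one_le_Gamma_of_two_le hk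
  rw [one_mul, ← div_div, norm_div, Real.norm_of_nonneg (zero_le_one.trans hΓ)]
  exact _root_.div_le_self (norm_nonneg _) hΓ

noncomputable def kernelSummand (α θ X Z : ℝ) (k l : ℕ) : ℝ :=
  ((-1) ^ k * X ^ k / (k ! * Gamma ((α + 1 + k) / θ))) *
    ((-1) ^ l * Z ^ l / (l ! * Gamma (α + 1 + θ * l))) * (θ / (α + 1 + k + θ * l))

lemma limitKernel_eq_tsum_kernelSummand (α θ x : ℝ) {y : ℝ} (hy : 0 ≤ y) :
    limitKernel α θ x y = ∑' k, ∑' l, kernelSummand α θ x (y ^ θ) k l := by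
  refine tsum_congr fun k => tsum_congr fun l => ?_
  rw [kernelSummand, rpow_mul hy, rpow_natCast]

lemma summable_uncurry_kernelSummand {α θ : ℝ} (hθ : 0 < θ) (hα : -1 < α) (X Z : ℝ) :
    Summable (uncurry (kernelSummand α θ X Z)) := by
  have hX := summable_norm_pow_div_factorial_mul_Gamma
    ((tendsto_atTop_add_const_left _ (α + 1) tendsto_natCast_atTop_atTop).atTop_div_const hθ) X
  have hZ := summable_norm_pow_div_factorial_mul_Gamma
    (tendsto_atTop_add_const_left _ (α + 1)
      (tendsto_natCast_atTop_atTop.const_mul_atTop hθ)) Z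
  refine Summable.of_norm_bounded ((hX.mul_norm hZ).mul_right (θ / (α + 1))) fun ⟨k, l⟩ => ?_
  have hden : α + 1 ≤ α + 1 + k + θ * l := by
    have : 0 ≤ θ * l := by positivity
    linarith [(Nat.cast_nonneg k : (0 : ℝ) ≤ k)]
  simp only [uncurry, kernelSummand, mul_div_assoc, norm_mul, norm_pow, norm_neg, norm_one,
    one_pow, one_mul]
  gcongr
  rw [Real.norm_of_nonneg (div_nonneg hθ.le (by linarith))]
  exact div_le_div_of_nonneg_left hθ.le (by linarith) hden

lemma mul_kernelSummand_dual {θ : ℝ} (hθ : θ ≠ 0) (α X Z : ℝ) (k l : ℕ) :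
    θ * kernelSummand ((α + 1) / θ - 1) (1 / θ) X Z k l = kernelSummand α θ Z X l k := by
  have hΓk : ((α + 1) / θ - 1 + 1 + k) / (1 / θ) = α + 1 + θ * k := by field_simp; ring
  have hΓl : (α + 1) / θ - 1 + 1 + 1 / θ * l = (α + 1 + l) / θ := by field_simp; ring
  have hden : (α + 1) / θ - 1 + 1 + k + 1 / θ * l = (α + 1 + l + θ * k) / θ := by
    field_simp; ring
  rw [kernelSummand, kernelSummand, hΓk, hΓl, hden, div_div_div_cancel_right₀ hθ]
  field_simp

theorem limitKernel_symmetry (θ α : ℝ) (hθ : 0 < θ) (hα : -1 < α)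
    (x y : ℝ) (hx : 0 < x) (hy : 0 < y) :
    limitKernel α θ (y ^ (1 / θ)) (x ^ (1 / θ)) =
      θ * limitKernel ((α + 1) / θ - 1) (1 / θ) x y := by
  have hxθ : (x ^ (1 / θ)) ^ θ = x := by rw [one_div, rpow_inv_rpow hx.le hθ.ne']
  rw [limitKernel_eq_tsum_kernelSummand _ _ _ (rpow_nonneg hx.le _), hxθ,
    limitKernel_eq_tsum_kernelSummand _ _ _ hy.le, ← tsum_mul_left]
  simp_rw [← tsum_mul_left, mul_kernelSummand_dual hθ.ne']
  exact (summable_uncurry_kernelSummand hθ hα _ _).tsum_comm.symm
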